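/- Let X be a real inner product space, η > 0, and K : X → X a map satisfying ⟪K(u) − K(v), u − v⟫ ≥ η·‖u − v‖² for all u, v ∈ X. Let λ be a real number with 0 < λ ≤ 2·(1 + η)/(1 + 2η). Suppose p, x, p⁺, p* ∈ X satisfy x + K(x) = p (i.e., x = J_K(p)), K(p*) = 0 (i.e., p* = J_K(p*)), and p⁺ = p + λ·(x − p). Then ‖p⁺ − p*‖ ≤ ((1 + (1 − λ)·η)/(1 + η))·‖p − p*‖. -/

import Mathlib

/-!
Put `d = p - p*`, `e = x - p*` and `ρ = 1 + η`. Strong monotonicity of `K` at `x` and `p*` reads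
`ρ‖e‖² ≤ ⟪d, e⟫`, i.e. `e` lies in the closed ball of radius `‖d‖/(2ρ)` about `d/(2ρ)`. Hence
`p⁺ - p* = (1 - λ)d + λe = (1 - λ + λ/(2ρ))d + λ(e - d/(2ρ))` has norm at most
`(|1 - λ + λ/(2ρ)| + λ/(2ρ))‖d‖`, and the bound `λ ≤ 2ρ/(2ρ - 1)` is exactly what makes the
absolute value disappear, leaving `(1 - λ + λ/ρ)‖d‖ = ((1 + (1 - λ)η)/(1 + η))‖d‖`.
-/

open scoped RealInnerProductSpace

section

variable {X : Type*} [NormedAddCommGroup X] [InnerProductSpace ℝ X]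

theorem norm_sub_smul_le_of_mul_norm_sq_le_inner {ρ : ℝ} (hρ : 0 < ρ) {d e : X}
    (h : ρ * ‖e‖ ^ 2 ≤ ⟪d, e⟫) : ‖e - (2 * ρ)⁻¹ • d‖ ≤ (2 * ρ)⁻¹ * ‖d‖ := by
  have hc : 0 ≤ (2 * ρ)⁻¹ := by positivity
  refine pow_le_pow_iff_left₀ (norm_nonneg _) (by positivity) two_ne_zero |>.mp ?_
  have hcρ : 2 * (2 * ρ)⁻¹ * ρ = 1 := by field_simp
  rw [norm_sub_sq_real, real_inner_smul_right, norm_smul_of_nonneg hc, real_inner_comm]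
  nlinarith [mul_le_mul_of_nonneg_left h hc]

theorem mul_norm_sub_sq_le_inner_of_add_eq {η : ℝ} {K : X → X}
    (hK : ∀ u v : X, η * ‖u - v‖ ^ 2 ≤ ⟪K u - K v, u - v⟫) {x y p q : X}
    (hx : x + K x = p) (hy : y + K y = q) : (1 + η) * ‖x - y‖ ^ 2 ≤ ⟪p - q, x - y⟫ := by
  have hpq : p - q = (x - y) + (K x - K y) := by rw [← hx, ← hy]; abel
  rw [hpq, inner_add_left, real_inner_self_eq_norm_sq]
  linarith [hK x y]

theorem norm_sub_smul_add_smul_le_of_mul_norm_sq_le_inner {ρ lam : ℝ} (hρ : 0 < ρ)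
    (hlam0 : 0 ≤ lam) (hlam : lam * (2 * ρ - 1) ≤ 2 * ρ) {d e : X}
    (h : ρ * ‖e‖ ^ 2 ≤ ⟪d, e⟫) :
    ‖(1 - lam) • d + lam • e‖ ≤ (1 - lam + lam / ρ) * ‖d‖ := by
  set c := (2 * ρ)⁻¹
  have hc : 0 ≤ 1 - lam + lam * c := by
    have hfac : 1 - lam + lam * c = (2 * ρ - lam * (2 * ρ - 1)) * c := by
      simp only [c]; field_simp; ring
    rw [hfac]
    exact mul_nonneg (by linarith) (by positivity)
  calc ‖(1 - lam) • d + lam • e‖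
      = ‖(1 - lam + lam * c) • d + lam • (e - c • d)‖ := by congr 1; module
    _ ≤ (1 - lam + lam * c) * ‖d‖ + lam * (c * ‖d‖) := by
      refine (norm_add_le _ _).trans ?_
      rw [norm_smul_of_nonneg hc, norm_smul_of_nonneg hlam0]
      gcongr
      exact norm_sub_smul_le_of_mul_norm_sq_le_inner hρ h
    _ = (1 - lam + lam / ρ) * ‖d‖ := by
      simp only [c]; field_simp; ring

end

theorem relaxed_resolvent_contraction
    {X : Type*} [NormedAddCommGroup X] [InnerProductSpace ℝ X]
    (η : ℝ) (hη : 0 < η) (K : X → X)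
    (hK : ∀ u v : X, η * ‖u - v‖ ^ 2 ≤ ⟪K u - K v, u - v⟫)
    (lam : ℝ) (hlam0 : 0 < lam) (hlam : lam ≤ 2 * (1 + η) / (1 + 2 * η))
    (p x pplus pstar : X)
    (hx : x + K x = p) (hstar : K pstar = 0)
    (hplus : pplus = p + lam • (x - p)) :
    ‖pplus - pstar‖ ≤ ((1 + (1 - lam) * η) / (1 + η)) * ‖p - pstar‖ := by
  have hρ : 0 < 1 + η := by linarith
  have hlam' : lam * (2 * (1 + η) - 1) ≤ 2 * (1 + η) := by
    rw [le_div_iff₀ (by linarith)] at hlam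
    linarith
  have hmono : (1 + η) * ‖x - pstar‖ ^ 2 ≤ ⟪p - pstar, x - pstar⟫ :=
    mul_norm_sub_sq_le_inner_of_add_eq hK hx (by rw [hstar, add_zero])
  have hfactor : (1 + (1 - lam) * η) / (1 + η) = 1 - lam + lam / (1 + η) := by
    field_simp; ring
  have hsplit : pplus - pstar = (1 - lam) • (p - pstar) + lam • (x - pstar) := by
    rw [hplus]; module
  rw [hfactor, hsplit]
  exact norm_sub_smul_add_smul_le_of_mul_norm_sq_le_inner hρ hlam0.le hlam' hmono
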